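/- Let ε > 0, λ = √2·ε, and L > (1/(2ε))·arctan(2). Then there exists a standing-wave profile ψ for parameters ε, L, λ that is even, strictly positive, and concentrated at the defects: ψ(L) = ψ(−L) and ψ(x) ≤ ψ(L) for all x ∈ ℝ. -/

import Mathlib

open Filter Topology Set

/-- A standing-wave profile for the double delta-well Gross–Pitaevskii equation with
parameters `ε, L, lam`: `ψ` is continuous, decays at `±∞`, has derivative `ψ'` and
satisfies `ψ'' = lam² ψ - 2 ψ³` away from `±L`, and the one-sided limits of `ψ'` at
`±L` exist and jump by `-ε ψ`. -/
def IsStandingWaveProfile (ε L lam : ℝ) (ψ ψ' : ℝ → ℝ) : Prop :=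
  Continuous ψ ∧
  Tendsto ψ atTop (𝓝 0) ∧ Tendsto ψ atBot (𝓝 0) ∧
  (∀ x : ℝ, x ≠ L → x ≠ -L →
    HasDerivAt ψ (ψ' x) x ∧
    HasDerivAt ψ' (lam ^ 2 * ψ x - 2 * ψ x ^ 3) x) ∧
  (∀ x : ℝ, x = L ∨ x = -L →
    ∃ a b : ℝ,
      Tendsto ψ' (𝓝[>] x) (𝓝 a) ∧
      Tendsto ψ' (𝓝[<] x) (𝓝 b) ∧
      a - b = -ε * ψ x)

/-!
The profile is a plateau glued to two half-solitons. On `[-L, L]` it is the constant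
`lam / √2`, a nonzero equilibrium of `u'' = lam² u - 2u³`; outside it is the decaying soliton
`lam / cosh (lam (|x| - L) + t₀)`, shifted by `t₀ = arsinh 1` so that it starts at height
`lam / cosh t₀ = lam / √2`, matching the plateau. Inside the plateau `ψ' = 0`, while the soliton
leaves with slope `∓lam² sinh t₀ / cosh² t₀ = ∓lam² / 2`, so the jump of `ψ'` at `±L` is
`-lam² / 2`. This equals `-ε ψ(±L) = -ε lam / √2` exactly when `lam = √2 ε`. The soliton is
decreasing in `|x|`, so the maximum `lam / √2` is attained on the plateau.
-/

open Real

noncomputable section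

def soliton (lam t s : ℝ) : ℝ := lam / cosh (lam * s + t)

def solitonDeriv (lam t s : ℝ) : ℝ := -lam ^ 2 * sinh (lam * s + t) / cosh (lam * s + t) ^ 2

theorem Real.tendsto_cosh_atTop : Tendsto cosh atTop atTop :=
  tendsto_atTop_mono (fun x => by rw [cosh_eq]; linarith [exp_pos (-x)])
    (tendsto_exp_atTop.atTop_div_const two_pos)

theorem hasDerivAt_soliton (lam t s : ℝ) :
    HasDerivAt (soliton lam t) (solitonDeriv lam t s) s := by
  have hu : HasDerivAt (fun s => lam * s + t) lam s := by
    simpa using ((hasDerivAt_id s).const_mul lam).add_const t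
  refine ((hasDerivAt_const s lam).div hu.cosh (cosh_pos _).ne').congr_deriv ?_
  simp only [solitonDeriv]
  ring

theorem hasDerivAt_solitonDeriv (lam t s : ℝ) :
    HasDerivAt (solitonDeriv lam t) (lam ^ 2 * soliton lam t s - 2 * soliton lam t s ^ 3) s := by
  have hu : HasDerivAt (fun s => lam * s + t) lam s := by
    simpa using ((hasDerivAt_id s).const_mul lam).add_const t
  have hC : cosh (lam * s + t) ≠ 0 := (cosh_pos _).ne'
  refine ((hu.sinh.const_mul (-lam ^ 2)).div (hu.cosh.fun_pow 2) (pow_ne_zero 2 hC)).congr_deriv ?_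
  simp only [soliton]
  field_simp
  norm_num
  linear_combination (-2 * lam ^ 3 * cosh (lam * s + t)) * cosh_sq (lam * s + t)

theorem tendsto_soliton_atTop {lam : ℝ} (t : ℝ) (hlam : 0 < lam) :
    Tendsto (soliton lam t) atTop (𝓝 0) := by
  have harg : Tendsto (fun s => cosh (lam * s + t)) atTop atTop :=
    tendsto_cosh_atTop.comp <| tendsto_atTop_add_const_right _ t <| tendsto_id.const_mul_atTop hlam
  have h := harg.inv_tendsto_atTop.const_mul lam
  rw [mul_zero] at h
  exact h.congr fun s => (div_eq_mul_inv _ _).symm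

theorem soliton_le_soliton_zero {lam t s : ℝ} (hlam : 0 ≤ lam) (ht : 0 ≤ t) (hs : 0 ≤ s) :
    soliton lam t s ≤ soliton lam t 0 := by
  refine div_le_div_of_nonneg_left hlam (cosh_pos _) (cosh_le_cosh.mpr ?_)
  rw [abs_of_nonneg (by simpa using ht), abs_of_nonneg (by positivity)]
  linarith [mul_nonneg hlam hs]

theorem soliton_arsinh_one_zero (lam : ℝ) : soliton lam (arsinh 1) 0 = lam / √2 := by
  norm_num [soliton, cosh_arsinh]

theorem solitonDeriv_arsinh_one_zero (lam : ℝ) : solitonDeriv lam (arsinh 1) 0 = -lam ^ 2 / 2 := by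
  norm_num [solitonDeriv, cosh_arsinh, sinh_arsinh]

def plateauProfile (lam L x : ℝ) : ℝ := soliton lam (arsinh 1) (max (|x| - L) 0)

def plateauProfileDeriv (lam L x : ℝ) : ℝ :=
  if L < x then solitonDeriv lam (arsinh 1) (x - L)
  else if x < -L then -solitonDeriv lam (arsinh 1) (-L - x)
  else 0

section Plateau

variable {lam L : ℝ}

theorem plateauProfile_neg (x : ℝ) : plateauProfile lam L (-x) = plateauProfile lam L x := by
  simp only [plateauProfile, abs_neg]

theorem plateauProfile_pos (hlam : 0 < lam) (x : ℝ) : 0 < plateauProfile lam L x :=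
  div_pos hlam (cosh_pos _)

theorem plateauProfile_of_abs_le {x : ℝ} (hx : |x| ≤ L) : plateauProfile lam L x = lam / √2 := by
  rw [plateauProfile, max_eq_right (by linarith), soliton_arsinh_one_zero]

theorem plateauProfile_le (hlam : 0 ≤ lam) (x : ℝ) : plateauProfile lam L x ≤ lam / √2 :=
  soliton_arsinh_one_zero lam ▸
    soliton_le_soliton_zero hlam (arsinh_nonneg_iff.mpr zero_le_one) (le_max_right _ _)

theorem continuous_plateauProfile : Continuous (plateauProfile lam L) :=
  (Differentiable.continuous fun s => (hasDerivAt_soliton lam (arsinh 1) s).differentiableAt).comp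
    (by fun_prop)

theorem tendsto_plateauProfile_of_tendsto_abs (hlam : 0 < lam) {l : Filter ℝ}
    (hl : Tendsto (|·|) l atTop) : Tendsto (plateauProfile lam L) l (𝓝 0) :=
  (tendsto_soliton_atTop _ hlam).comp <|
    tendsto_atTop_mono (fun _ => le_max_left _ _) (tendsto_atTop_add_const_right _ (-L) hl)

theorem plateauProfile_eq_of_lt {x : ℝ} (hL : 0 ≤ L) (hx : L < x) :
    plateauProfile lam L x = soliton lam (arsinh 1) (x - L) := by
  rw [plateauProfile, abs_of_pos (by linarith), max_eq_left (by linarith)]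

theorem plateauProfile_eq_of_lt_neg {x : ℝ} (hL : 0 ≤ L) (hx : x < -L) :
    plateauProfile lam L x = soliton lam (arsinh 1) (-L - x) := by
  rw [← plateauProfile_neg, plateauProfile_eq_of_lt hL (by linarith)]
  ring_nf

theorem plateauProfileDeriv_of_lt {x : ℝ} (hx : L < x) :
    plateauProfileDeriv lam L x = solitonDeriv lam (arsinh 1) (x - L) :=
  if_pos hx

theorem plateauProfileDeriv_of_lt_neg {x : ℝ} (hL : 0 ≤ L) (hx : x < -L) :
    plateauProfileDeriv lam L x = -solitonDeriv lam (arsinh 1) (-L - x) := by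
  rw [plateauProfileDeriv, if_neg (by linarith), if_pos hx]

theorem plateauProfileDeriv_of_mem_Icc {x : ℝ} (hx : x ∈ Icc (-L) L) :
    plateauProfileDeriv lam L x = 0 := by
  rw [plateauProfileDeriv, if_neg (not_lt.mpr hx.2), if_neg (not_lt.mpr hx.1)]

theorem plateauProfile_solves_of_lt (hL : 0 ≤ L) {x : ℝ} (hx : L < x) :
    HasDerivAt (plateauProfile lam L) (plateauProfileDeriv lam L x) x ∧
      HasDerivAt (plateauProfileDeriv lam L)
        (lam ^ 2 * plateauProfile lam L x - 2 * plateauProfile lam L x ^ 3) x := by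
  have hnhds : Ioi L ∈ 𝓝 x := Ioi_mem_nhds hx
  rw [plateauProfileDeriv_of_lt hx, plateauProfile_eq_of_lt hL hx]
  exact ⟨((hasDerivAt_soliton _ _ _).comp_sub_const x L).congr_of_eventuallyEq
      (eventually_of_mem hnhds fun y hy => plateauProfile_eq_of_lt hL hy),
    ((hasDerivAt_solitonDeriv _ _ _).comp_sub_const x L).congr_of_eventuallyEq
      (eventually_of_mem hnhds fun y hy => plateauProfileDeriv_of_lt hy)⟩

theorem plateauProfile_solves_of_lt_neg (hL : 0 ≤ L) {x : ℝ} (hx : x < -L) :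
    HasDerivAt (plateauProfile lam L) (plateauProfileDeriv lam L x) x ∧
      HasDerivAt (plateauProfileDeriv lam L)
        (lam ^ 2 * plateauProfile lam L x - 2 * plateauProfile lam L x ^ 3) x := by
  have hnhds : Iio (-L) ∈ 𝓝 x := Iio_mem_nhds hx
  rw [plateauProfileDeriv_of_lt_neg hL hx, plateauProfile_eq_of_lt_neg hL hx]
  exact ⟨((hasDerivAt_soliton _ _ _).comp_const_sub (-L) x).congr_of_eventuallyEq
      (eventually_of_mem hnhds fun y hy => plateauProfile_eq_of_lt_neg hL hy),
    (((hasDerivAt_solitonDeriv _ _ _).comp_const_sub (-L) x).fun_neg.congr_of_eventuallyEq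
      (eventually_of_mem hnhds fun y hy => plateauProfileDeriv_of_lt_neg hL hy)).congr_deriv
      (neg_neg _)⟩

theorem plateauProfile_solves_of_mem_Ioo {x : ℝ} (hx : x ∈ Ioo (-L) L) :
    HasDerivAt (plateauProfile lam L) (plateauProfileDeriv lam L x) x ∧
      HasDerivAt (plateauProfileDeriv lam L)
        (lam ^ 2 * plateauProfile lam L x - 2 * plateauProfile lam L x ^ 3) x := by
  have hnhds : Ioo (-L) L ∈ 𝓝 x := Ioo_mem_nhds hx.1 hx.2
  have hequilibrium : lam ^ 2 * (lam / √2) - 2 * (lam / √2) ^ 3 = 0 := by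
    field_simp
    norm_num
  rw [plateauProfileDeriv_of_mem_Icc (Ioo_subset_Icc_self hx),
    plateauProfile_of_abs_le (abs_le.mpr ⟨hx.1.le, hx.2.le⟩), hequilibrium]
  exact ⟨(hasDerivAt_const x _).congr_of_eventuallyEq (eventually_of_mem hnhds fun y hy =>
      plateauProfile_of_abs_le (abs_le.mpr ⟨hy.1.le, hy.2.le⟩)),
    (hasDerivAt_const x _).congr_of_eventuallyEq (eventually_of_mem hnhds fun y hy =>
      plateauProfileDeriv_of_mem_Icc (Ioo_subset_Icc_self hy))⟩

theorem tendsto_plateauProfileDeriv_nhdsGT :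
    Tendsto (plateauProfileDeriv lam L) (𝓝[>] L) (𝓝 (-lam ^ 2 / 2)) := by
  have h := ((hasDerivAt_solitonDeriv lam (arsinh 1) (L - L)).comp_sub_const L L).continuousAt
  rw [ContinuousAt, sub_self, solitonDeriv_arsinh_one_zero] at h
  exact (h.mono_left nhdsWithin_le_nhds).congr'
    (eventually_nhdsWithin_of_forall fun y hy => (plateauProfileDeriv_of_lt hy).symm)

theorem tendsto_plateauProfileDeriv_nhdsLT_neg (hL : 0 ≤ L) :
    Tendsto (plateauProfileDeriv lam L) (𝓝[<] (-L)) (𝓝 (lam ^ 2 / 2)) := by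
  have h := ((hasDerivAt_solitonDeriv lam (arsinh 1) (-L - -L)).comp_const_sub (-L) (-L)).fun_neg
    |>.continuousAt
  rw [ContinuousAt, sub_self, solitonDeriv_arsinh_one_zero, neg_div, neg_neg] at h
  exact (h.mono_left nhdsWithin_le_nhds).congr'
    (eventually_nhdsWithin_of_forall fun y hy => (plateauProfileDeriv_of_lt_neg hL hy).symm)

theorem tendsto_plateauProfileDeriv_nhdsLT (hL : 0 < L) :
    Tendsto (plateauProfileDeriv lam L) (𝓝[<] L) (𝓝 0) :=
  tendsto_const_nhds.congr' <| eventually_of_mem (Ioo_mem_nhdsLT (by linarith)) fun _ hy =>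
    (plateauProfileDeriv_of_mem_Icc (Ioo_subset_Icc_self hy)).symm

theorem tendsto_plateauProfileDeriv_nhdsGT_neg (hL : 0 < L) :
    Tendsto (plateauProfileDeriv lam L) (𝓝[>] (-L)) (𝓝 0) :=
  tendsto_const_nhds.congr' <| eventually_of_mem (Ioo_mem_nhdsGT (by linarith)) fun _ hy =>
    (plateauProfileDeriv_of_mem_Icc (Ioo_subset_Icc_self hy)).symm

end Plateau

end

/-- for `lam = √2 ε` and `L > (1/(2ε)) arctan 2` there is an even,
strictly positive standing-wave profile concentrated at the defects. -/
theorem exists_symmetric_standing_wave_concentrated_regime3 (ε L lam : ℝ)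
    (hε : 0 < ε) (hlam : lam = Real.sqrt 2 * ε)
    (hL : 1 / (2 * ε) * Real.arctan 2 < L) :
    ∃ ψ ψ' : ℝ → ℝ, IsStandingWaveProfile ε L lam ψ ψ' ∧
      (∀ x : ℝ, ψ (-x) = ψ x) ∧ (∀ x : ℝ, 0 < ψ x) ∧
      ψ L = ψ (-L) ∧ (∀ x : ℝ, ψ x ≤ ψ L) := by
  have hlam0 : 0 < lam := hlam ▸ by positivity
  have hL0 : 0 < L := lt_of_le_of_lt (by positivity) hL
  have hψL : plateauProfile lam L L = lam / √2 := plateauProfile_of_abs_le (abs_of_pos hL0).le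
  have hψnegL : plateauProfile lam L (-L) = lam / √2 := by rw [plateauProfile_neg, hψL]
  have hjump : -lam ^ 2 / 2 = -ε * (lam / √2) := by
    subst hlam
    field_simp
    norm_num
  refine ⟨plateauProfile lam L, plateauProfileDeriv lam L,
    ⟨continuous_plateauProfile, tendsto_plateauProfile_of_tendsto_abs hlam0 tendsto_abs_atTop_atTop,
      tendsto_plateauProfile_of_tendsto_abs hlam0 tendsto_abs_atBot_atTop, fun x hxL hxnL => ?_,
      fun x hx => ?_⟩,
    plateauProfile_neg, plateauProfile_pos hlam0, (plateauProfile_neg L).symm,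
    fun x => hψL ▸ plateauProfile_le hlam0.le x⟩
  · rcases lt_or_gt_of_ne hxL with hx | hx
    · rcases lt_or_gt_of_ne hxnL with hx' | hx'
      · exact plateauProfile_solves_of_lt_neg hL0.le hx'
      · exact plateauProfile_solves_of_mem_Ioo ⟨hx', hx⟩
    · exact plateauProfile_solves_of_lt hL0.le hx
  · rcases hx with rfl | rfl
    · exact ⟨_, _, tendsto_plateauProfileDeriv_nhdsGT, tendsto_plateauProfileDeriv_nhdsLT hL0,
        by rw [hψL, sub_zero, hjump]⟩
    · exact ⟨_, _, tendsto_plateauProfileDeriv_nhdsGT_neg hL0,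
        tendsto_plateauProfileDeriv_nhdsLT_neg hL0.le, by rw [hψnegL, ← hjump]; ring⟩
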